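/- Let G be a finite simple graph and let k be an integer with β(G) ≤ k ≤ ν(G). Then G has a maximal matching of size exactly k. -/

import Mathlib

open SimpleGraph

variable {V : Type*}

/-- `M` is a matching in `G`: a set of pairwise vertex-disjoint edges of `G`. -/
def IsMatchingIn (G : SimpleGraph V) (M : Finset (Sym2 V)) : Prop :=
  (∀ e ∈ M, e ∈ G.edgeSet) ∧
    ∀ e ∈ M, ∀ f ∈ M, e ≠ f → ∀ v : V, v ∈ e → v ∉ f

/-- `M` is a maximal matching in `G`: a matching not properly contained in another matching. -/
def IsMaximalMatchingIn (G : SimpleGraph V) (M : Finset (Sym2 V)) : Prop :=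
  IsMatchingIn G M ∧ ∀ M', IsMatchingIn G M' → M ⊆ M' → M' = M

/-- `M` saturates (covers) the vertex `v`. -/
def Sat (M : Finset (Sym2 V)) (v : V) : Prop := ∃ e ∈ M, v ∈ e

/-- The matching number `ν(G)`. -/
noncomputable def nuNum (G : SimpleGraph V) : ℕ :=
  sSup {n | ∃ M, IsMatchingIn G M ∧ M.card = n}

/-- The minimum maximal matching number `β(G)`. -/
noncomputable def betaNum (G : SimpleGraph V) : ℕ :=
  sInf {n | ∃ M, IsMaximalMatchingIn G M ∧ M.card = n}

/-- The matching gap `μ(G) = ν(G) - β(G)`. -/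
noncomputable def muGap (G : SimpleGraph V) : ℕ := nuNum G - betaNum G

/-! A maximal matching `M` with `|M| < ν(G)` can be traded for a matching with one more edge
that still covers every vertex covered by `M`: among the matchings of size `|M| + 1`, take one
sharing as many edges with `M` as possible; if it missed a vertex `v` covered by an edge `f = vw`
of `M`, then swapping `f` in for the edge through `w` (or, if there is none, for any edge outside
`M`) would share more. A matching covering all vertices of a maximal matching is maximal, since
maximality only says that every edge meets a covered vertex. Starting from a maximal matching of
size `β(G)`, this climbs through all sizes up to `ν(G)`. -/

namespace IsMatchingIn

variable {G : SimpleGraph V} {M N : Finset (Sym2 V)}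

protected theorem subset (hM : IsMatchingIn G M) (hNM : N ⊆ M) : IsMatchingIn G N :=
  ⟨fun e he => hM.1 e (hNM he), fun e he f hf hef => hM.2 e (hNM he) f (hNM hf) hef⟩

protected theorem insert [DecidableEq V] {e : Sym2 V} (hM : IsMatchingIn G M) (he : e ∈ G.edgeSet)
    (hdisj : ∀ f ∈ M, ∀ v ∈ e, v ∉ f) : IsMatchingIn G (insert e M) := by
  refine ⟨fun f hf => ?_, fun f hf f' hf' hff' v hvf hvf' => ?_⟩
  · rcases Finset.mem_insert.mp hf with rfl | hf
    exacts [he, hM.1 f hf]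
  · rcases Finset.mem_insert.mp hf with rfl | hfM
    · rcases Finset.mem_insert.mp hf' with rfl | hf'M
      exacts [hff' rfl, hdisj f' hf'M v hvf hvf']
    · rcases Finset.mem_insert.mp hf' with rfl | hf'M
      exacts [hdisj f hfM v hvf' hvf, hM.2 f hfM f' hf'M hff' v hvf hvf']

theorem exists_card_sdiff_lt [DecidableEq V] {P : Finset (Sym2 V)} (hM : IsMatchingIn G M)
    (hP : IsMatchingIn G P) (hcard : M.card < P.card) {v : V} (hvM : Sat M v) (hvP : ¬Sat P v) :
    ∃ Q, IsMatchingIn G Q ∧ Q.card = P.card ∧ (M \ Q).card < (M \ P).card := by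
  obtain ⟨f, hfM, hvf⟩ := hvM
  obtain ⟨w, hf⟩ : ∃ w, f = s(v, w) := ⟨_, (Sym2.other_spec hvf).symm⟩
  have hfP : f ∉ P := fun h => hvP ⟨f, h, hvf⟩
  -- `g` is the edge of `P` at `w`, which is not in `M` as `f ∈ M` meets it; failing that, any
  -- edge of `P` outside `M`, which exists as `|M| < |P|`.
  obtain ⟨g, hgP, hgM, hwg⟩ : ∃ g ∈ P, g ∉ M ∧ ∀ e ∈ P.erase g, w ∉ e := by
    by_cases hw : Sat P w
    · obtain ⟨g, hgP, hwg⟩ := hw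
      have hfg : f ≠ g := fun h => hfP (h ▸ hgP)
      refine ⟨g, hgP, fun hgM => hM.2 f hfM g hgM hfg w (hf ▸ Sym2.mem_mk_right v w) hwg, ?_⟩
      exact fun e he hwe =>
        hP.2 e (Finset.mem_of_mem_erase he) g hgP (Finset.ne_of_mem_erase he) w hwe hwg
    · obtain ⟨g, hgP, hgM⟩ :=
        Finset.not_subset.mp fun hPM => (Finset.card_le_card hPM).not_gt hcard
      exact ⟨g, hgP, hgM, fun e he hwe => hw ⟨e, Finset.mem_of_mem_erase he, hwe⟩⟩
  refine ⟨insert f (P.erase g), (hP.subset (Finset.erase_subset g P)).insert (hM.1 f hfM) ?_,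
    ?_, Finset.card_lt_card ?_⟩
  · intro e he u hu
    rcases Sym2.mem_iff.mp (hf ▸ hu) with rfl | rfl
    exacts [fun h => hvP ⟨e, Finset.mem_of_mem_erase he, h⟩, hwg e he]
  · rw [Finset.card_insert_of_notMem fun h => hfP (Finset.mem_of_mem_erase h),
      Finset.card_erase_add_one hgP]
  · refine (Finset.ssubset_iff_of_subset ?_).mpr ⟨f, by simp [hfM, hfP], by simp⟩
    intro x hx
    simp only [Finset.mem_sdiff, Finset.mem_insert, Finset.mem_erase, not_or] at hx ⊢
    exact ⟨hx.1, fun hxP => hx.2.2 ⟨fun hxg => hgM (hxg ▸ hx.1), hxP⟩⟩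

theorem exists_card_eq_succ_sat_imp (hM : IsMatchingIn G M) (hN : IsMatchingIn G N)
    (hlt : M.card < N.card) :
    ∃ M', IsMatchingIn G M' ∧ M'.card = M.card + 1 ∧ ∀ v, Sat M v → Sat M' v := by
  classical
  obtain ⟨P₀, hP₀N, hP₀card⟩ :=
    Finset.exists_subset_card_eq (show M.card + 1 ≤ N.card from hlt)
  set S := {d | ∃ P, IsMatchingIn G P ∧ P.card = M.card + 1 ∧ (M \ P).card = d}
  obtain ⟨P, hP, hPcard, hPmin⟩ : sInf S ∈ S :=
    Nat.sInf_mem ⟨_, P₀, hN.subset hP₀N, hP₀card, rfl⟩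
  refine ⟨P, hP, hPcard, fun v hvM => by_contra fun hvP => ?_⟩
  obtain ⟨Q, hQ, hQcard, hQlt⟩ := hM.exists_card_sdiff_lt hP (by omega) hvM hvP
  have hQS : (M \ Q).card ∈ S := ⟨Q, hQ, hQcard.trans hPcard, rfl⟩
  exact (Nat.sInf_le hQS).not_gt (hPmin ▸ hQlt)

end IsMatchingIn

section Maximal

variable {G : SimpleGraph V} {M N : Finset (Sym2 V)}

theorem IsMaximalMatchingIn.exists_sat_of_mem_edgeSet (hM : IsMaximalMatchingIn G M)
    {e : Sym2 V} (he : e ∈ G.edgeSet) : ∃ v ∈ e, Sat M v := by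
  classical
  by_contra! hfree
  have heM : insert e M = M :=
    hM.2 _ (hM.1.insert he fun f hf v hv hvf => hfree v hv ⟨f, hf, hvf⟩)
      (Finset.subset_insert e M)
  exact hfree _ e.out_fst_mem ⟨e, heM ▸ Finset.mem_insert_self e M, e.out_fst_mem⟩

theorem isMaximalMatchingIn_of_forall_exists_sat (hM : IsMatchingIn G M)
    (hdom : ∀ e ∈ G.edgeSet, ∃ v ∈ e, Sat M v) : IsMaximalMatchingIn G M := by
  refine ⟨hM, fun M' hM' hMM' => by_contra fun hne => ?_⟩
  obtain ⟨e, heM', heM⟩ :=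
    Finset.exists_of_ssubset (Finset.ssubset_iff_subset_ne.mpr ⟨hMM', Ne.symm hne⟩)
  obtain ⟨v, hve, f, hfM, hvf⟩ := hdom e (hM'.1 e heM')
  exact hM'.2 e heM' f (hMM' hfM) (fun h => heM (h ▸ hfM)) v hve hvf

theorem IsMaximalMatchingIn.of_sat_imp (hM : IsMaximalMatchingIn G M) (hN : IsMatchingIn G N)
    (hsat : ∀ v, Sat M v → Sat N v) : IsMaximalMatchingIn G N :=
  isMaximalMatchingIn_of_forall_exists_sat hN fun _ he =>
    let ⟨v, hv, hMv⟩ := hM.exists_sat_of_mem_edgeSet he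
    ⟨v, hv, hsat v hMv⟩

end Maximal

section Numbers

variable [Fintype V]

theorem bddAbove_card_isMatchingIn (G : SimpleGraph V) :
    BddAbove {n | ∃ M, IsMatchingIn G M ∧ M.card = n} := by
  classical
  exact ⟨Fintype.card (Sym2 V), by rintro _ ⟨M, -, rfl⟩; exact Finset.card_le_univ M⟩

theorem IsMatchingIn.card_le_nuNum {G : SimpleGraph V} {M : Finset (Sym2 V)}
    (hM : IsMatchingIn G M) : M.card ≤ nuNum G :=
  le_csSup (bddAbove_card_isMatchingIn G) ⟨M, hM, rfl⟩

theorem exists_isMatchingIn_card_eq_nuNum (G : SimpleGraph V) :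
    ∃ M, IsMatchingIn G M ∧ M.card = nuNum G :=
  Nat.sSup_mem (s := {n | ∃ M, IsMatchingIn G M ∧ M.card = n})
    ⟨0, ∅, ⟨by simp, by simp⟩, rfl⟩ (bddAbove_card_isMatchingIn G)

theorem exists_isMaximalMatchingIn_card_eq_betaNum (G : SimpleGraph V) :
    ∃ M, IsMaximalMatchingIn G M ∧ M.card = betaNum G := by
  obtain ⟨N, hN, hNcard⟩ := exists_isMatchingIn_card_eq_nuNum G
  refine Nat.sInf_mem (s := {n | ∃ M, IsMaximalMatchingIn G M ∧ M.card = n})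
    ⟨_, N, ⟨hN, fun M hM hNM => ?_⟩, rfl⟩
  exact (Finset.eq_of_subset_of_card_le hNM (hNcard ▸ hM.card_le_nuNum)).symm

end Numbers

theorem stmt_1 {V : Type*} [Fintype V] (G : SimpleGraph V) (k : ℕ)
    (hk₁ : betaNum G ≤ k) (hk₂ : k ≤ nuNum G) :
    ∃ M : Finset (Sym2 V), IsMaximalMatchingIn G M ∧ M.card = k := by
  obtain ⟨N, hN, hNcard⟩ := exists_isMatchingIn_card_eq_nuNum G
  induction k, hk₁ using Nat.le_induction with
  | base => exact exists_isMaximalMatchingIn_card_eq_betaNum G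
  | succ n _ ih =>
    obtain ⟨M, hM, rfl⟩ := ih (by omega)
    obtain ⟨M', hM', hM'card, hsat⟩ := hM.1.exists_card_eq_succ_sat_imp hN (by omega)
    exact ⟨M', hM.of_sat_imp hM' hsat, hM'card⟩
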